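/- (Closed form of the regularized mirror-descent step.) Let A be a finite set, let q and p_t be strictly positive probability distributions on A, let Q : A → ℝ, and let λ, η > 0. Then the unique minimizer over the probability simplex Δ(A) of the function p ↦ ⟨−Q, p⟩ + λ·KL(p‖q) + (1/η)·KL(p‖p_t) is given by p*(a) = (1/Z)·q(a)^{ηλ/(ηλ+1)}·p_t(a)^{1/(ηλ+1)}·exp(η·Q(a)/(ηλ+1)), where Z = Σ_{a'} q(a')^{ηλ/(ηλ+1)}·p_t(a')^{1/(ηλ+1)}·exp(η·Q(a')/(ηλ+1)). -/

import Mathlib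

open Finset

/-- The probability simplex over a finite set. -/
def probSimplex (A : Type*) [Fintype A] : Set (A → ℝ) :=
  {p | (∀ a, 0 ≤ p a) ∧ ∑ a, p a = 1}

/-- KL divergence between two distributions on a finite set. -/
noncomputable def KLdiv {A : Type*} [Fintype A] (p q : A → ℝ) : ℝ :=
  ∑ a, p a * Real.log (p a / q a)

/-- The regularized mirror-descent objective
`p ↦ ⟨−Q, p⟩ + λ·KL(p‖q) + (1/η)·KL(p‖pₜ)`. -/
noncomputable def mdObj {A : Type*} [Fintype A]
    (Q : A → ℝ) (q pt : A → ℝ) (lam eta : ℝ) (p : A → ℝ) : ℝ :=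
  (∑ a, -Q a * p a) + lam * KLdiv p q + (1 / eta) * KLdiv p pt

/-!
Completing the square in the entropic sense: with `κ = λ + 1/η`, every term of the objective is
affine in `p a` and `p a · log p a`, and `log p*(a)` is exactly the affine combination of
`Q a`, `log q a`, `log pₜ a` that makes `mdObj p = κ · KL(p‖p*) − κ · log Z` on the simplex.
Gibbs' inequality, in the form `KL(p‖r) = ∑ r · klFun (p / r)` with `klFun ≥ 0` vanishing only
at `1`, then shows that `p*` is the unique minimiser.
-/

open Real InformationTheory

section KLdiv

variable {A : Type*} [Fintype A]

lemma mul_klFun_div {t s : ℝ} (hs : s ≠ 0) :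
    s * klFun (t / s) = t * log (t / s) + s - t := by
  rw [klFun_apply]
  field_simp

lemma KLdiv_eq_sum_mul_klFun {p r : A → ℝ} (hr : ∀ a, r a ≠ 0) (hsum : ∑ a, p a = ∑ a, r a) :
    KLdiv p r = ∑ a, r a * klFun (p a / r a) := by
  simp only [mul_klFun_div (hr _), sum_sub_distrib, sum_add_distrib, hsum, KLdiv]
  ring

lemma mul_klFun_div_nonneg {t s : ℝ} (ht : 0 ≤ t) (hs : 0 < s) : 0 ≤ s * klFun (t / s) :=
  mul_nonneg hs.le (klFun_nonneg (div_nonneg ht hs.le))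

lemma KLdiv_nonneg {p r : A → ℝ} (hp : ∀ a, 0 ≤ p a) (hr : ∀ a, 0 < r a)
    (hsum : ∑ a, p a = ∑ a, r a) : 0 ≤ KLdiv p r := by
  rw [KLdiv_eq_sum_mul_klFun (fun a => (hr a).ne') hsum]
  exact sum_nonneg fun a _ => mul_klFun_div_nonneg (hp a) (hr a)

lemma KLdiv_pos {p r : A → ℝ} (hp : ∀ a, 0 ≤ p a) (hr : ∀ a, 0 < r a)
    (hsum : ∑ a, p a = ∑ a, r a) (hne : p ≠ r) : 0 < KLdiv p r := by
  obtain ⟨a, ha⟩ := Function.ne_iff.mp hne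
  have hklFun : klFun (p a / r a) ≠ 0 := by
    rwa [ne_eq, klFun_eq_zero_iff (div_nonneg (hp a) (hr a).le), div_eq_one_iff_eq (hr a).ne']
  rw [KLdiv_eq_sum_mul_klFun (fun a => (hr a).ne') hsum]
  exact sum_pos' (fun a _ => mul_klFun_div_nonneg (hp a) (hr a))
    ⟨a, mem_univ a, lt_of_le_of_ne (mul_klFun_div_nonneg (hp a) (hr a))
      (mul_ne_zero (hr a).ne' hklFun).symm⟩

@[simp]
lemma KLdiv_self (r : A → ℝ) : KLdiv r r = 0 := by
  refine sum_eq_zero fun a _ => ?_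
  rcases eq_or_ne (r a) 0 with h | h <;> simp [h]

lemma mdObj_eq_KLdiv_sub {Q q pt pstar p : A → ℝ} {lam eta c : ℝ}
    (hq : ∀ a, q a ≠ 0) (hpt : ∀ a, pt a ≠ 0) (hpstar : ∀ a, pstar a ≠ 0)
    (hlog : ∀ a, (lam + eta⁻¹) * log (pstar a) =
      Q a + lam * log (q a) + eta⁻¹ * log (pt a) - c)
    (hp : ∑ a, p a = 1) :
    mdObj Q q pt lam eta p = (lam + eta⁻¹) * KLdiv p pstar - c := by
  have hterm : ∀ a, -Q a * p a + lam * (p a * log (p a / q a)) +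
      eta⁻¹ * (p a * log (p a / pt a)) =
      (lam + eta⁻¹) * (p a * log (p a / pstar a)) - c * p a := by
    intro a
    rcases eq_or_ne (p a) 0 with h0 | h0
    · simp [h0]
    · rw [log_div h0 (hq a), log_div h0 (hpt a), log_div h0 (hpstar a)]
      linear_combination (p a) * hlog a
  rw [mdObj, KLdiv, KLdiv, KLdiv, one_div, mul_sum, mul_sum, ← sum_add_distrib,
    ← sum_add_distrib, sum_congr rfl fun a _ => hterm a, sum_sub_distrib, ← mul_sum, ← mul_sum,
    hp, mul_one]

end KLdiv

lemma mul_log_mdStep {Z x y r lam eta : ℝ} (hZ : 0 < Z) (hx : 0 < x) (hy : 0 < y)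
    (heta : eta ≠ 0) (hden : eta * lam + 1 ≠ 0) :
    (lam + eta⁻¹) * log ((1 / Z) * (x ^ (eta * lam / (eta * lam + 1)) *
      y ^ (1 / (eta * lam + 1)) * exp (eta * r / (eta * lam + 1)))) =
      r + lam * log x + eta⁻¹ * log y - (lam + eta⁻¹) * log Z := by
  rw [log_mul (by positivity) (by positivity), log_mul (by positivity) (by positivity),
    log_mul (by positivity) (by positivity), log_rpow hx, log_rpow hy, log_exp, one_div, log_inv]
  have hκ : lam + eta⁻¹ = (eta * lam + 1) / eta := by field_simp
  rw [hκ]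
  field_simp
  ring

theorem md_step_closed_form_general {A : Type*} [Fintype A] [Nonempty A]
    (q pt : A → ℝ)
    (hqpos : ∀ a, 0 < q a) (hptpos : ∀ a, 0 < pt a)
    (Q : A → ℝ) (lam eta : ℝ) (hlam : 0 < lam) (heta : 0 < eta) :
    let Z : ℝ := ∑ a', q a' ^ (eta * lam / (eta * lam + 1)) *
      pt a' ^ (1 / (eta * lam + 1)) * Real.exp (eta * Q a' / (eta * lam + 1));
    let pstar : A → ℝ := fun a => (1 / Z) * (q a ^ (eta * lam / (eta * lam + 1)) *
      pt a ^ (1 / (eta * lam + 1)) * Real.exp (eta * Q a / (eta * lam + 1)));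
    pstar ∈ probSimplex A ∧
      (∀ p ∈ probSimplex A, mdObj Q q pt lam eta pstar ≤ mdObj Q q pt lam eta p) ∧
      (∀ p ∈ probSimplex A, p ≠ pstar → mdObj Q q pt lam eta pstar < mdObj Q q pt lam eta p) := by
  intro Z pstar
  have hZ : 0 < Z := sum_pos (fun a _ => by have := hqpos a; have := hptpos a; positivity)
    univ_nonempty
  have hpstar : ∀ a, 0 < pstar a := fun a => by have := hqpos a; have := hptpos a; positivity
  have hmem : pstar ∈ probSimplex A := by
    refine ⟨fun a => (hpstar a).le, ?_⟩
    simp only [pstar, ← mul_sum]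
    exact one_div_mul_cancel hZ.ne'
  have hobj : ∀ p ∈ probSimplex A,
      mdObj Q q pt lam eta p = (lam + eta⁻¹) * KLdiv p pstar - (lam + eta⁻¹) * log Z :=
    fun p hp => mdObj_eq_KLdiv_sub (fun a => (hqpos a).ne') (fun a => (hptpos a).ne')
      (fun a => (hpstar a).ne')
      (fun a => mul_log_mdStep hZ (hqpos a) (hptpos a) heta.ne' (by positivity)) hp.2
  refine ⟨hmem, fun p hp => ?_, fun p hp hne => ?_⟩
  · rw [hobj p hp, hobj pstar hmem, KLdiv_self]
    gcongr
    exact KLdiv_nonneg hp.1 hpstar (hp.2.trans hmem.2.symm)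
  · rw [hobj p hp, hobj pstar hmem, KLdiv_self]
    gcongr
    exact KLdiv_pos hp.1 hpstar (hp.2.trans hmem.2.symm) hne

/-- **Closed form of the regularized mirror-descent step.**  For a finite set `A`, strictly
positive distributions `q, pₜ` on `A`, `Q : A → ℝ`, and `λ, η > 0`, the unique minimizer over
the simplex of `p ↦ ⟨−Q, p⟩ + λ·KL(p‖q) + (1/η)·KL(p‖pₜ)` is
`p*(a) = (1/Z)·q(a)^{ηλ/(ηλ+1)}·pₜ(a)^{1/(ηλ+1)}·exp(η·Q(a)/(ηλ+1))` with `Z` the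
normalizing constant. -/
theorem md_step_closed_form {A : Type*} [Fintype A] [Nonempty A]
    (q pt : A → ℝ) (hq : q ∈ probSimplex A) (hpt : pt ∈ probSimplex A)
    (hqpos : ∀ a, 0 < q a) (hptpos : ∀ a, 0 < pt a)
    (Q : A → ℝ) (lam eta : ℝ) (hlam : 0 < lam) (heta : 0 < eta) :
    let Z : ℝ := ∑ a', q a' ^ (eta * lam / (eta * lam + 1)) *
      pt a' ^ (1 / (eta * lam + 1)) * Real.exp (eta * Q a' / (eta * lam + 1));
    let pstar : A → ℝ := fun a => (1 / Z) * (q a ^ (eta * lam / (eta * lam + 1)) *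
      pt a ^ (1 / (eta * lam + 1)) * Real.exp (eta * Q a / (eta * lam + 1)));
    pstar ∈ probSimplex A ∧
      (∀ p ∈ probSimplex A, mdObj Q q pt lam eta pstar ≤ mdObj Q q pt lam eta p) ∧
      (∀ p ∈ probSimplex A, p ≠ pstar → mdObj Q q pt lam eta pstar < mdObj Q q pt lam eta p) :=
  md_step_closed_form_general q pt hqpos hptpos Q lam eta hlam heta
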